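/- arXiv:2103.01377 — 4 statements merged into one kernel-verified Lean document; each statement's English description precedes it below -/
import Mathlib

section
/- For any composition k = (k_1,...,k_r), complex numbers x_1,...,x_r in the closed unit disk, and integers l ≥ 0, n ≥ 1, the shifted strict multiple harmonic sum Σ_{n ≥ n_1 > ... > n_r > 0} Π_{j=1}^r x_j^{n_j+l}/(n_j+l)^{k_j} equals (-1)^r Σ_{j=0}^r (-1)^j ζ_{n+l}(k_1,...,k_j; x_1,...,x_j) · ζ_l^⋆(k_r,...,k_{j+1}; x_r,...,x_{j+1}). -/
open Finset

/-- Multiple harmonic sum `ζ_m(k;x)`. -/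
noncomputable def mhs : ℕ → List (ℕ × ℂ) → ℂ
  | _, [] => 1
  | n, (k, x) :: rest => ∑ m ∈ Finset.Icc 1 n, x ^ m / (m : ℂ) ^ k * mhs (m - 1) rest

/-- Multiple harmonic star sum `ζ_m^⋆(k;x)`. -/
noncomputable def mhss : ℕ → List (ℕ × ℂ) → ℂ
  | _, [] => 1
  | n, (k, x) :: rest => ∑ m ∈ Finset.Icc 1 n, x ^ m / (m : ℂ) ^ k * mhss m rest

/-- Shifted strict multiple harmonic sum
`Σ_{n ≥ n_1 > ... > n_r ≥ 1} Π x_j^{n_j+l}/(n_j+l)^{k_j}`. -/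
noncomputable def mhsShift (l : ℕ) : ℕ → List (ℕ × ℂ) → ℂ
  | _, [] => 1
  | n, (k, x) :: rest =>
      ∑ m ∈ Finset.Icc 1 n, x ^ (m + l) / ((m + l : ℕ) : ℂ) ^ k * mhsShift l (m - 1) rest

/-!
Both sides are sums over chains `n + l ≥ m₁ > ⋯ > m_r ≥ 1` (the shifted sum being the part with
`m_r > l`), so it suffices to induct on the depth, peeling off the innermost index `t`. In
`ζ_{n+l}` this index ranges over `[1, n + l]`, in the shifted sum over `(l, n + l]`; the terms with
`t ≤ l` are, by the induction hypothesis at lower bound `t`, exactly the alternating sum of products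
`ζ_{n+l} · ζ^⋆_l` in which `t` is the outermost index of the star sum.
-/

theorem List.take_zip {α β : Type*} (l : List α) (l' : List β) (n : ℕ) :
    (l.zip l').take n = (l.take n).zip (l'.take n) := by
  simp [List.zip, List.take_zipWith]

theorem List.drop_zip {α β : Type*} (l : List α) (l' : List β) (n : ℕ) :
    (l.zip l').drop n = (l.drop n).zip (l'.drop n) := by
  simp [List.zip, List.drop_zipWith]

noncomputable def mhsIoc (a : ℕ) : ℕ → List (ℕ × ℂ) → ℂ
  | _, [] => 1
  | b, (k, x) :: rest => ∑ m ∈ Ioc a b, x ^ m / (m : ℂ) ^ k * mhsIoc a (m - 1) rest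

theorem mhs_eq_mhsIoc (N : ℕ) (q : List (ℕ × ℂ)) : mhs N q = mhsIoc 0 N q := by
  induction q generalizing N with
  | nil => rfl
  | cons a q ih =>
    obtain ⟨k, x⟩ := a
    rw [mhs, mhsIoc]
    exact sum_congr rfl fun m _ ↦ by rw [ih]

theorem mhsShift_eq_mhsIoc (l n : ℕ) (q : List (ℕ × ℂ)) :
    mhsShift l n q = mhsIoc l (n + l) q := by
  induction q generalizing n with
  | nil => rfl
  | cons a q ih =>
    obtain ⟨k, x⟩ := a
    have hIoc : Ioc l (n + l) = (Icc 1 n).map (addRightEmbedding l) := by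
      rw [← Icc_add_one_left_eq_Ioc, map_add_right_Icc, add_comm 1 l]
    rw [mhsShift, mhsIoc, hIoc, sum_map]
    refine sum_congr rfl fun m hm ↦ ?_
    rw [mem_Icc] at hm
    rw [ih, addRightEmbedding_apply, show m - 1 + l = m + l - 1 by omega, Nat.cast_add]

theorem mhsIoc_append_singleton (a b k : ℕ) (x : ℂ) (q : List (ℕ × ℂ)) :
    mhsIoc a b (q ++ [(k, x)]) = ∑ t ∈ Ioc a b, x ^ t / (t : ℂ) ^ k * mhsIoc t b q := by
  induction q generalizing b with
  | nil => simp [mhsIoc]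
  | cons c q ih =>
    obtain ⟨k', x'⟩ := c
    simp only [List.cons_append, mhsIoc, ih, mul_sum]
    rw [sum_comm' (t' := Ioc a b) (s' := fun t ↦ Ioc t b) fun m t ↦ by simp only [mem_Ioc]; omega]
    exact sum_congr rfl fun _ _ ↦ sum_congr rfl fun _ _ ↦ mul_left_comm _ _ _

theorem sum_neg_one_pow_mul_mhs_mul_mhss (q : List (ℕ × ℂ)) {l N : ℕ} (hlN : l ≤ N) :
    ∑ j ∈ range (q.length + 1), (-1 : ℂ) ^ j * mhs N (q.take j) * mhss l (q.drop j).reverse =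
      (-1) ^ q.length * mhsIoc l N q := by
  induction q using List.reverseRecOn generalizing l with
  | nil => simp [mhs, mhss, mhsIoc]
  | append_singleton q a ih =>
    obtain ⟨k, x⟩ := a
    set c : ℕ → ℂ := fun t ↦ x ^ t / (t : ℂ) ^ k
    have hstar : ∀ j ∈ range (q.length + 1),
        (-1 : ℂ) ^ j * mhs N ((q ++ [(k, x)]).take j) * mhss l ((q ++ [(k, x)]).drop j).reverse =
          ∑ t ∈ Ioc 0 l, c t * ((-1) ^ j * mhs N (q.take j) * mhss t (q.drop j).reverse) := by
      intro j hj
      have hj : j ≤ q.length := Nat.lt_succ_iff.mp (mem_range.mp hj)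
      rw [List.take_append_of_le_length hj, List.drop_append_of_le_length hj, List.reverse_append,
        List.reverse_singleton, List.singleton_append, mhss, mul_sum]
      exact sum_congr rfl fun _ _ ↦ by ring
    have hinner : ∀ t ∈ Ioc 0 l, ∑ j ∈ range (q.length + 1),
        c t * ((-1) ^ j * mhs N (q.take j) * mhss t (q.drop j).reverse) =
          (-1) ^ q.length * (c t * mhsIoc t N q) := by
      intro t ht
      rw [← mul_sum, ih ((mem_Ioc.mp ht).2.trans hlN)]
      ring
    rw [List.length_append, List.length_singleton, sum_range_succ, sum_congr rfl hstar, sum_comm,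
      sum_congr rfl hinner, ← mul_sum, List.take_of_length_le (by simp),
      List.drop_of_length_le (by simp), mhs_eq_mhsIoc, mhsIoc_append_singleton,
      mhsIoc_append_singleton, ← sum_Ioc_consecutive _ (Nat.zero_le l) hlN]
    simp only [List.reverse_nil, mhss]
    ring

theorem stmt2_general (ks : List ℕ) (xs : List ℂ) (hlen : ks.length = xs.length)
    (l : ℕ) (n : ℕ) :
    mhsShift l n (ks.zip xs) =
      (-1 : ℂ) ^ ks.length * ∑ j ∈ Finset.range (ks.length + 1),
        (-1 : ℂ) ^ j * mhs (n + l) ((ks.take j).zip (xs.take j)) *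
          mhss l (((ks.drop j).zip (xs.drop j)).reverse) := by
  have hzip : (ks.zip xs).length = ks.length := by rw [List.length_zip, hlen, min_self]
  simp only [← List.take_zip, ← List.drop_zip, ← hzip]
  rw [sum_neg_one_pow_mul_mhs_mul_mhss _ (Nat.le_add_left l n), ← mul_assoc, ← pow_add,
    Even.neg_one_pow ⟨_, rfl⟩, one_mul, mhsShift_eq_mhsIoc]

theorem stmt2 (ks : List ℕ) (xs : List ℂ) (hlen : ks.length = xs.length)
    (hk : ∀ k ∈ ks, 1 ≤ k) (hx : ∀ x ∈ xs, ‖x‖ ≤ 1)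
    (l : ℕ) (n : ℕ) (hn : 1 ≤ n) :
    mhsShift l n (ks.zip xs) =
      (-1 : ℂ) ^ ks.length * ∑ j ∈ Finset.range (ks.length + 1),
        (-1 : ℂ) ^ j * mhs (n + l) ((ks.take j).zip (xs.take j)) *
          mhss l (((ks.drop j).zip (xs.drop j)).reverse) :=
  stmt2_general ks xs hlen l n
end

section
/- For any composition k = (k_1,...,k_r), complex numbers x_1,...,x_r in the closed unit disk, and integers l ≥ 0, n ≥ 1, the shifted non-strict multiple harmonic sum Σ_{n ≥ n_1 ≥ n_2 ≥ ... ≥ n_r > 0} Π_{j=1}^r x_j^{n_j+l}/(n_j+l)^{k_j} equals (-1)^r Σ_{j=0}^r (-1)^j ζ_{n+l}^⋆(k_1,...,k_j; x_1,...,x_j) · ζ_l(k_r,...,k_{j+1}; x_r,...,x_{j+1}). -/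
open Finset

/-- Shifted non-strict (star) multiple harmonic sum
`Σ_{n ≥ n_1 ≥ ... ≥ n_r ≥ 1} Π x_j^{n_j+l}/(n_j+l)^{k_j}`. -/
noncomputable def mhssShift (l : ℕ) : ℕ → List (ℕ × ℂ) → ℂ
  | _, [] => 1
  | n, (k, x) :: rest =>
      ∑ m ∈ Finset.Icc 1 n, x ^ (m + l) / ((m + l : ℕ) : ℂ) ^ k * mhssShift l m rest

/-!
Write `f_a(m) = x^m / m^k` for a letter `a = (k, x)` and, for a word `L = a_1 ⋯ a_r`,
`S(M, l, L) = Σ_j (-1)^j ζ^⋆_M(a_1, …, a_j) ζ_l(a_r, …, a_{j+1})` (`altMhsSum`).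
Raising `M` by one changes `S(M, l, a :: T)` by `-f_a(M+1) S(M+1, l, T)`, and raising `l` by one
changes `S(M, l, I ++ [b])` by `f_b(l+1) S(M, l, I)`. A double induction on the length and on `m`
then gives the antipode relation `S(m, m, L) = 0` for nonempty `L`. Summing the first recursion
over `M = l+1, …, l+n` expresses the shifted sum as `(-1)^r S(n+l, l, L) + (-1)^(r+1) S(l, l, L)`,
and the second term vanishes by the antipode relation.
-/

lemma mhss_zero_cons (p : ℕ × ℂ) (L : List (ℕ × ℂ)) : mhss 0 (p :: L) = 0 := by
  simp [mhss]

lemma mhs_zero_cons (p : ℕ × ℂ) (L : List (ℕ × ℂ)) : mhs 0 (p :: L) = 0 := by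
  simp [mhs]

lemma mhss_succ_cons (m k : ℕ) (x : ℂ) (L : List (ℕ × ℂ)) :
    mhss (m + 1) ((k, x) :: L)
      = mhss m ((k, x) :: L) + x ^ (m + 1) / ((m + 1 : ℕ) : ℂ) ^ k * mhss (m + 1) L := by
  rw [mhss, mhss, sum_Icc_succ_top (by omega)]

lemma mhs_succ_cons (m k : ℕ) (x : ℂ) (L : List (ℕ × ℂ)) :
    mhs (m + 1) ((k, x) :: L)
      = mhs m ((k, x) :: L) + x ^ (m + 1) / ((m + 1 : ℕ) : ℂ) ^ k * mhs m L := by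
  rw [mhs, mhs, sum_Icc_succ_top (by omega), Nat.add_sub_cancel]

noncomputable def altMhsSum (M l : ℕ) (L : List (ℕ × ℂ)) : ℂ :=
  ∑ j ∈ range (L.length + 1), (-1 : ℂ) ^ j * mhss M (L.take j) * mhs l (L.drop j).reverse

lemma altMhsSum_nil (M l : ℕ) : altMhsSum M l [] = 1 := by
  simp [altMhsSum, mhss, mhs]

lemma altMhsSum_singleton_self (m k : ℕ) (x : ℂ) : altMhsSum m m [(k, x)] = 0 := by
  simp [altMhsSum, sum_range_succ, mhss, mhs]

lemma altMhsSum_cons (M l : ℕ) (a : ℕ × ℂ) (T : List (ℕ × ℂ)) :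
    altMhsSum M l (a :: T) = mhs l (a :: T).reverse -
      ∑ j ∈ range (T.length + 1), (-1 : ℂ) ^ j * mhss M (a :: T.take j) * mhs l (T.drop j).reverse := by
  rw [altMhsSum, List.length_cons, sum_range_succ', sub_eq_neg_add, ← sum_neg_distrib]
  simp [pow_succ, mhss]

lemma altMhsSum_zero_left (l : ℕ) (L : List (ℕ × ℂ)) : altMhsSum 0 l L = mhs l L.reverse := by
  cases L with
  | nil => simp [altMhsSum_nil, mhs]
  | cons a T => simp [altMhsSum_cons, mhss_zero_cons]

lemma altMhsSum_succ_left_cons (M l k : ℕ) (x : ℂ) (T : List (ℕ × ℂ)) :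
    altMhsSum (M + 1) l ((k, x) :: T) = altMhsSum M l ((k, x) :: T) -
      x ^ (M + 1) / ((M + 1 : ℕ) : ℂ) ^ k * altMhsSum (M + 1) l T := by
  rw [altMhsSum_cons, altMhsSum_cons, altMhsSum, mul_sum, sub_sub, ← sum_add_distrib]
  congr 2 with j
  rw [mhss_succ_cons]
  ring

lemma altMhsSum_succ_right_append (M l k : ℕ) (x : ℂ) (I : List (ℕ × ℂ)) :
    altMhsSum M (l + 1) (I ++ [(k, x)]) = altMhsSum M l (I ++ [(k, x)]) +
      x ^ (l + 1) / ((l + 1 : ℕ) : ℂ) ^ k * altMhsSum M l I := by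
  have hterm : ∀ j ∈ range (I.length + 1),
      (-1 : ℂ) ^ j * mhss M ((I ++ [(k, x)]).take j) * mhs (l + 1) ((I ++ [(k, x)]).drop j).reverse
        = (-1 : ℂ) ^ j * mhss M ((I ++ [(k, x)]).take j) * mhs l ((I ++ [(k, x)]).drop j).reverse
          + x ^ (l + 1) / ((l + 1 : ℕ) : ℂ) ^ k *
            ((-1 : ℂ) ^ j * mhss M (I.take j) * mhs l (I.drop j).reverse) := by
    intro j hj
    have hjI : j ≤ I.length := Nat.lt_succ_iff.mp (mem_range.mp hj)
    rw [List.take_append_of_le_length hjI, List.drop_append_of_le_length hjI, List.reverse_append,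
      List.reverse_singleton, List.singleton_append, mhs_succ_cons]
    ring
  simp only [altMhsSum, List.length_append, List.length_singleton]
  rw [sum_range_succ, sum_range_succ _ (I.length + 1), sum_congr rfl hterm, sum_add_distrib,
    ← mul_sum]
  rw [List.drop_of_length_le (by simp), List.reverse_nil, mhs, mhs]
  ring

theorem altMhsSum_self_eq_zero {L : List (ℕ × ℂ)} (hL : L ≠ []) (m : ℕ) : altMhsSum m m L = 0 := by
  induction hr : L.length using Nat.strong_induction_on generalizing L m with
  | _ r ih =>
  obtain _ | ⟨⟨k, x⟩, T⟩ := L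
  · exact absurd rfl hL
  obtain rfl | hT := eq_or_ne T []
  · exact altMhsSum_singleton_self m k x
  obtain ⟨I, ⟨k', x'⟩, hIb⟩ : ∃ I b, (k, x) :: T = I ++ [b] :=
    ⟨_, _, (List.dropLast_append_getLast (List.cons_ne_nil _ _)).symm⟩
  have hlen : I.length + 1 = T.length + 1 := by
    simpa using congrArg List.length hIb.symm
  have hI : I ≠ [] := by
    rintro rfl
    exact hT (List.length_eq_zero_iff.mp (by simpa using hlen.symm))
  induction m with
  | zero => rw [altMhsSum_zero_left, hIb, List.reverse_append]; exact mhs_zero_cons _ _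
  | succ m ihm =>
    rw [altMhsSum_succ_left_cons, hIb, altMhsSum_succ_right_append, ← hIb, ihm,
      ih _ (by simp [← hr]) hT m.succ rfl, ih _ (by simp [← hr, ← hlen]) hI m rfl]
    ring

lemma sum_Icc_mul_altMhsSum (l n k : ℕ) (x : ℂ) (T : List (ℕ × ℂ)) :
    ∑ m ∈ Icc 1 n, x ^ (m + l) / ((m + l : ℕ) : ℂ) ^ k * altMhsSum (m + l) l T
      = altMhsSum l l ((k, x) :: T) - altMhsSum (n + l) l ((k, x) :: T) := by
  induction n with
  | zero => simp
  | succ n ih =>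
    rw [sum_Icc_succ_top (by omega), ih, Nat.add_right_comm, altMhsSum_succ_left_cons]
    ring

theorem mhssShift_eq_altMhsSum (l : ℕ) (L : List (ℕ × ℂ)) (n : ℕ) :
    mhssShift l n L = (-1 : ℂ) ^ L.length * altMhsSum (n + l) l L := by
  induction L generalizing n with
  | nil => simp [mhssShift, altMhsSum_nil]
  | cons a T ih =>
    obtain ⟨k, x⟩ := a
    simp only [mhssShift, ih, mul_left_comm _ ((-1 : ℂ) ^ T.length), ← mul_sum,
      sum_Icc_mul_altMhsSum, altMhsSum_self_eq_zero (List.cons_ne_nil _ _), List.length_cons]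
    ring

theorem stmt3_general (ks : List ℕ) (xs : List ℂ) (hlen : ks.length = xs.length)
    (l : ℕ) (n : ℕ) :
    mhssShift l n (ks.zip xs) =
      (-1 : ℂ) ^ ks.length * ∑ j ∈ Finset.range (ks.length + 1),
        (-1 : ℂ) ^ j * mhss (n + l) ((ks.take j).zip (xs.take j)) *
          mhs l (((ks.drop j).zip (xs.drop j)).reverse) := by
  have hlz : (ks.zip xs).length = ks.length := by simp [hlen]
  rw [mhssShift_eq_altMhsSum, altMhsSum, hlz]
  simp [List.zip, List.take_zipWith, List.drop_zipWith]

theorem stmt3 (ks : List ℕ) (xs : List ℂ) (hlen : ks.length = xs.length)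
    (hk : ∀ k ∈ ks, 1 ≤ k) (hx : ∀ x ∈ xs, ‖x‖ ≤ 1)
    (l : ℕ) (n : ℕ) (hn : 1 ≤ n) :
    mhssShift l n (ks.zip xs) =
      (-1 : ℂ) ^ ks.length * ∑ j ∈ Finset.range (ks.length + 1),
        (-1 : ℂ) ^ j * mhss (n + l) ((ks.take j).zip (xs.take j)) *
          mhs l (((ks.drop j).zip (xs.drop j)).reverse) :=
  stmt3_general ks xs hlen l n
end

section
/- For positive integers m_1,...,m_p with m_p ≥ 2 and composition k = (k_1,...,k_r), the convoluted multiple t-values satisfy Σ_{j=1}^{p+1} (-1)^{j-1} t(m_p,...,m_j) · t(k ⊛ (1,m_1,...,m_{j-1})^⋆) = t(m_p,...,m_1,k_1+1,k_2,...,k_r), where t(∅) := 1 for the j = p+1 term. -/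
open Finset

/-- Multiple t-harmonic sum `t_n(k) = Σ_{n ≥ n_1 > ... > n_r > 0} Π 1/(2n_j−1)^{k_j}`. -/
noncomputable def thsum : ℕ → List ℕ → ℝ
  | _, [] => 1
  | n, k :: rest =>
      ∑ m ∈ Finset.Icc 1 n, (1 / ((2 * m - 1 : ℕ) : ℝ) ^ k) * thsum (m - 1) rest

/-- Multiple t-harmonic star sum `t_n^⋆(k)`. -/
noncomputable def thsums : ℕ → List ℕ → ℝ
  | _, [] => 1
  | n, k :: rest =>
      ∑ m ∈ Finset.Icc 1 n, (1 / ((2 * m - 1 : ℕ) : ℝ) ^ k) * thsums m rest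

/-- Multiple t-value `t(k) = Σ_{n_1 > ... > n_r > 0} Π 1/(2n_j−1)^{k_j}`, with `t(∅) = 1`. -/
noncomputable def tval : List ℕ → ℝ
  | [] => 1
  | k :: rest =>
      ∑' n : ℕ+, (1 / ((2 * (n : ℕ) - 1 : ℕ) : ℝ) ^ k) * thsum ((n : ℕ) - 1) rest

/-- Convoluted multiple t-value
`t(k ⊛ l^⋆) = Σ_{n≥1} t_{n-1}(k_2,...,k_r) t_n^⋆(l_2,...,l_s)/(2n−1)^{k_1+l_1}`. -/
noncomputable def convT (ks ls : List ℕ) : ℝ :=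
  ∑' n : ℕ+, thsum ((n : ℕ) - 1) ks.tail * thsums (n : ℕ) ls.tail /
    ((2 * (n : ℕ) - 1 : ℕ) : ℝ) ^ (ks.headI + ls.headI)

/-!
Truncate every series at `N`. Expanding the star sums `t⋆_n(m_1, …, m_{j-1})` and comparing
with the chains `N ≥ n_1 > ⋯ > n_p > n`, the alternating sum over `j` is an inclusion–exclusion
that leaves exactly the chains lying above `n`; hence the truncated left-hand side equals
`t_N(m_p, …, m_1, k_1 + 1, k_2, …, k_r)`. Letting `N → ∞` only needs the convergence of each
truncated factor, which follows from `t⋆_n(l) ≤ 4 ^ |l| · n ^ (1/4)` (telescope `n ^ (1/4)`).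
-/

open Filter Topology

namespace MultipleTValue

noncomputable def oddInvPow (k m : ℕ) : ℝ := 1 / ((2 * m - 1 : ℕ) : ℝ) ^ k

lemma thsums_cons (n k : ℕ) (l : List ℕ) :
    thsums n (k :: l) = ∑ m ∈ Icc 1 n, oddInvPow k m * thsums m l := rfl

lemma oddInvPow_nonneg (k m : ℕ) : 0 ≤ oddInvPow k m := by
  unfold oddInvPow; positivity

lemma one_le_two_mul_sub_one {m : ℕ} (hm : 1 ≤ m) : (1 : ℝ) ≤ ((2 * m - 1 : ℕ) : ℝ) := by
  exact_mod_cast (by omega : 1 ≤ 2 * m - 1)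

lemma oddInvPow_le_inv {k m : ℕ} (hk : 1 ≤ k) (hm : 1 ≤ m) :
    oddInvPow k m ≤ ((2 * m - 1 : ℕ) : ℝ)⁻¹ := by
  have h1 := one_le_two_mul_sub_one hm
  rw [oddInvPow, one_div]
  exact inv_anti₀ (by linarith) (le_self_pow₀ h1 (by omega))

lemma oddInvPow_le_inv_sq {k m : ℕ} (hk : 2 ≤ k) (hm : 1 ≤ m) :
    oddInvPow k m ≤ ((m : ℝ) ^ 2)⁻¹ := by
  have hm' : (m : ℝ) ≤ ((2 * m - 1 : ℕ) : ℝ) := by exact_mod_cast (by omega : m ≤ 2 * m - 1)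
  have hm0 : (0 : ℝ) < m := by exact_mod_cast hm
  rw [oddInvPow, one_div]
  refine inv_anti₀ (by positivity) ?_
  calc (m : ℝ) ^ 2 ≤ ((2 * m - 1 : ℕ) : ℝ) ^ 2 := by gcongr
    _ ≤ ((2 * m - 1 : ℕ) : ℝ) ^ k := pow_le_pow_right₀ (one_le_two_mul_sub_one hm) hk

lemma thsum_nonneg (n : ℕ) (l : List ℕ) : 0 ≤ thsum n l := by
  induction l generalizing n with
  | nil => exact zero_le_one
  | cons k l ih => exact sum_nonneg fun m _ => mul_nonneg (oddInvPow_nonneg k m) (ih _)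

lemma thsums_nonneg (n : ℕ) (l : List ℕ) : 0 ≤ thsums n l := by
  induction l generalizing n with
  | nil => exact zero_le_one
  | cons k l ih => exact sum_nonneg fun m _ => mul_nonneg (oddInvPow_nonneg k m) (ih _)

lemma thsums_mono (l : List ℕ) : Monotone (thsums · l) := by
  intro n n' h
  cases l with
  | nil => exact le_rfl
  | cons k l =>
    exact sum_le_sum_of_subset_of_nonneg (Icc_subset_Icc_right h)
      fun m _ _ => mul_nonneg (oddInvPow_nonneg k m) (thsums_nonneg m l)

lemma thsum_le_thsums (n : ℕ) (l : List ℕ) : thsum n l ≤ thsums n l := by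
  induction l generalizing n with
  | nil => exact le_rfl
  | cons k l ih =>
    refine sum_le_sum fun m _ => mul_le_mul_of_nonneg_left ?_ (oddInvPow_nonneg k m)
    exact (ih _).trans (thsums_mono l (Nat.sub_le m 1))

lemma div_two_mul_pow_four_sub_one_le {a b : ℝ} (hb : 0 ≤ b) (hba : b ≤ a)
    (h : a ^ 4 - b ^ 4 = 1) : a / (2 * a ^ 4 - 1) ≤ 4 * (a - b) := by
  have ha : 1 ≤ a ^ 4 := by nlinarith [pow_nonneg hb 4]
  -- `a ^ 4 - b ^ 4 = (a - b)(a + b)(a² + b²) ≤ 4 (a - b) a³`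
  have h4 : 1 ≤ 4 * (a - b) * a ^ 3 := by
    rw [← h]
    nlinarith [mul_le_mul_of_nonneg_left hba (sub_nonneg.2 hba), pow_le_pow_left₀ hb hba 2,
      pow_le_pow_left₀ hb hba 3, sub_nonneg.2 hba]
  rw [div_le_iff₀ (by linarith)]
  nlinarith [mul_le_mul_of_nonneg_left h4 (by linarith : 0 ≤ a),
    mul_le_mul_of_nonneg_left (by linarith : a ^ 4 ≤ 2 * a ^ 4 - 1) (by linarith : 0 ≤ a - b)]

lemma inv_mul_rpow_le_four_mul_sub {m : ℕ} (hm : 1 ≤ m) :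
    ((2 * m - 1 : ℕ) : ℝ)⁻¹ * (m : ℝ) ^ (4⁻¹ : ℝ) ≤
      4 * ((m : ℝ) ^ (4⁻¹ : ℝ) - ((m - 1 : ℕ) : ℝ) ^ (4⁻¹ : ℝ)) := by
  have fourth_pow (x : ℕ) : (((x : ℝ) ^ (4⁻¹ : ℝ)) ^ 4 = x) := by
    simpa using Real.rpow_inv_natCast_pow (n := 4) (Nat.cast_nonneg x) (by norm_num)
  have hcast : ((2 * m - 1 : ℕ) : ℝ) = 2 * ((m : ℝ) ^ (4⁻¹ : ℝ)) ^ 4 - 1 := by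
    rw [fourth_pow]; push_cast [Nat.cast_sub (by omega : 1 ≤ 2 * m)]; ring
  rw [hcast, inv_mul_eq_div]
  refine div_two_mul_pow_four_sub_one_le (by positivity) ?_ ?_
  · exact Real.rpow_le_rpow (Nat.cast_nonneg _) (by exact_mod_cast Nat.sub_le m 1) (by norm_num)
  · rw [fourth_pow, fourth_pow, Nat.cast_sub hm]; ring

lemma sum_inv_mul_rpow_le (n : ℕ) :
    ∑ m ∈ Icc 1 n, ((2 * m - 1 : ℕ) : ℝ)⁻¹ * (m : ℝ) ^ (4⁻¹ : ℝ) ≤ 4 * (n : ℝ) ^ (4⁻¹ : ℝ) := by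
  induction n with
  | zero => simp
  | succ n ih =>
    rw [sum_Icc_succ_top (by omega)]
    have step := inv_mul_rpow_le_four_mul_sub (m := n + 1) (by omega)
    rw [Nat.add_sub_cancel] at step
    linarith

lemma thsums_le_four_pow_mul_rpow {l : List ℕ} (hl : ∀ k ∈ l, 1 ≤ k) {n : ℕ} (hn : 1 ≤ n) :
    thsums n l ≤ 4 ^ l.length * (n : ℝ) ^ (4⁻¹ : ℝ) := by
  induction l generalizing n with
  | nil => simpa [thsums] using Real.one_le_rpow (by exact_mod_cast hn) (by norm_num)
  | cons k l ih =>
    have hl' : ∀ k ∈ l, 1 ≤ k := fun k hk => hl k (List.mem_cons_of_mem _ hk)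
    calc thsums n (k :: l)
        ≤ ∑ m ∈ Icc 1 n, ((2 * m - 1 : ℕ) : ℝ)⁻¹ * (4 ^ l.length * (m : ℝ) ^ (4⁻¹ : ℝ)) := by
          refine sum_le_sum fun m hm => ?_
          have hm : 1 ≤ m := (mem_Icc.1 hm).1
          exact mul_le_mul (oddInvPow_le_inv (hl k List.mem_cons_self) hm) (ih hl' hm)
            (thsums_nonneg _ _) (by positivity)
      _ = 4 ^ l.length * ∑ m ∈ Icc 1 n, ((2 * m - 1 : ℕ) : ℝ)⁻¹ * (m : ℝ) ^ (4⁻¹ : ℝ) := by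
          rw [mul_sum]; exact sum_congr rfl fun m _ => by ring
      _ ≤ 4 ^ (k :: l).length * (n : ℝ) ^ (4⁻¹ : ℝ) := by
          rw [List.length_cons, pow_succ, mul_assoc]
          gcongr
          exact sum_inv_mul_rpow_le n

lemma summable_thsum_mul_thsums_div {e : ℕ} (he : 2 ≤ e) {A B : List ℕ}
    (hA : ∀ k ∈ A, 1 ≤ k) (hB : ∀ k ∈ B, 1 ≤ k) :
    Summable fun n : ℕ+ =>
      thsum ((n : ℕ) - 1) A * thsums (n : ℕ) B / ((2 * (n : ℕ) - 1 : ℕ) : ℝ) ^ e := by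
  have hmajor : Summable fun n : ℕ+ =>
      (4 : ℝ) ^ (A.length + B.length) * ((n : ℕ) : ℝ) ^ (-(3 / 2) : ℝ) :=
    ((Real.summable_nat_rpow.2 (by norm_num)).comp_injective PNat.coe_injective).mul_left _
  refine hmajor.of_nonneg_of_le (fun n => div_nonneg
    (mul_nonneg (thsum_nonneg _ _) (thsums_nonneg _ _)) (by positivity)) fun n => ?_
  have hn : 1 ≤ (n : ℕ) := n.pos
  have hn0 : (0 : ℝ) < (n : ℕ) := by exact_mod_cast hn
  have hA' : thsum ((n : ℕ) - 1) A ≤ 4 ^ A.length * ((n : ℕ) : ℝ) ^ (4⁻¹ : ℝ) :=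
    (thsum_le_thsums _ _).trans
      ((thsums_mono A (Nat.sub_le _ 1)).trans (thsums_le_four_pow_mul_rpow hA hn))
  have he' : (((2 * (n : ℕ) - 1 : ℕ) : ℝ) ^ e)⁻¹ ≤ (((n : ℕ) : ℝ) ^ 2)⁻¹ := by
    simpa [oddInvPow] using oddInvPow_le_inv_sq he hn
  have hpow : ((n : ℕ) : ℝ) ^ (4⁻¹ : ℝ) * ((n : ℕ) : ℝ) ^ (4⁻¹ : ℝ) * (((n : ℕ) : ℝ) ^ 2)⁻¹ =
      ((n : ℕ) : ℝ) ^ (-(3 / 2) : ℝ) := by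
    rw [← Real.rpow_add hn0, ← Real.rpow_natCast, ← Real.rpow_neg hn0.le, ← Real.rpow_add hn0]
    norm_num
  calc _ = thsum ((n : ℕ) - 1) A * thsums (n : ℕ) B * (((2 * (n : ℕ) - 1 : ℕ) : ℝ) ^ e)⁻¹ :=
        div_eq_mul_inv _ _
    _ ≤ (4 ^ A.length * ((n : ℕ) : ℝ) ^ (4⁻¹ : ℝ)) * (4 ^ B.length * ((n : ℕ) : ℝ) ^ (4⁻¹ : ℝ))
          * (((n : ℕ) : ℝ) ^ 2)⁻¹ := by
        gcongr
        exacts [thsums_nonneg _ _, thsums_le_four_pow_mul_rpow hB hn]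
    _ = _ := by rw [pow_add, ← hpow]; ring

lemma tendsto_sum_Icc_tsum_pnat {M : Type*} [AddCommMonoid M] [TopologicalSpace M] {f : ℕ → M}
    (hf : Summable fun n : ℕ+ => f n) :
    Tendsto (fun N => ∑ n ∈ Icc 1 N, f n) atTop (𝓝 (∑' n : ℕ+, f n)) := by
  refine (hasSum_pnat_iff_hasSum_succ.1 hf.hasSum).tendsto_sum_nat.congr fun N => ?_
  rw [range_eq_Ico, sum_Ico_add' f 0 N 1, zero_add, Ico_add_one_right_eq_Icc]

lemma tendsto_thsum_tval {l : List ℕ} (hl : ∀ k ∈ l, 1 ≤ k) (hhead : ∀ k ∈ l.head?, 2 ≤ k) :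
    Tendsto (fun N => thsum N l) atTop (𝓝 (tval l)) := by
  cases l with
  | nil => exact tendsto_const_nhds
  | cons k l =>
    have hs := summable_thsum_mul_thsums_div (hhead k rfl) (B := [])
      (fun x hx => hl x (List.mem_cons_of_mem _ hx)) (by simp)
    exact tendsto_sum_Icc_tsum_pnat (hs.congr fun n => by simp only [thsums]; ring)

lemma tendsto_sum_Icc_convT {k : ℕ} (hk : 1 ≤ k) {ks ls : List ℕ} (hks : ∀ x ∈ ks, 1 ≤ x)
    (hls : ∀ x ∈ ls, 1 ≤ x) :
    Tendsto (fun N =>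
        ∑ n ∈ Icc 1 N, thsum (n - 1) ks * thsums n ls / ((2 * n - 1 : ℕ) : ℝ) ^ (k + 1))
      atTop (𝓝 (convT (k :: ks) (1 :: ls))) :=
  tendsto_sum_Icc_tsum_pnat (summable_thsum_mul_thsums_div (by omega) hks hls)

/-- `thsumIoc a b l` sums over the chains `b ≥ n₁ > ⋯ > n_r > a`. -/
noncomputable def thsumIoc : ℕ → ℕ → List ℕ → ℝ
  | _, _, [] => 1
  | a, b, k :: l => ∑ m ∈ Ioc a b, oddInvPow k m * thsumIoc a (m - 1) l

lemma thsumIoc_zero (N : ℕ) (l : List ℕ) : thsumIoc 0 N l = thsum N l := by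
  induction l generalizing N with
  | nil => rfl
  | cons k l ih => exact sum_congr rfl fun m _ => by rw [ih]; rfl

lemma thsumIoc_append_cons (A : List ℕ) (k : ℕ) (B : List ℕ) (a b : ℕ) :
    thsumIoc a b (A ++ k :: B) =
      ∑ i ∈ Ioc a b, thsumIoc i b A * oddInvPow k i * thsumIoc a (i - 1) B := by
  induction A generalizing b with
  | nil => exact sum_congr rfl fun i _ => by rw [thsumIoc, one_mul]
  | cons c A ih =>
    simp only [List.cons_append, thsumIoc, ih, mul_sum, sum_mul]
    rw [sum_comm' (t' := Ioc a b) (s' := fun i => Ioc i b) fun m i => by simp only [mem_Ioc]; omega]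
    exact sum_congr rfl fun i _ => sum_congr rfl fun m _ => by ring

lemma thsum_append_cons (A : List ℕ) (k : ℕ) (B : List ℕ) (N : ℕ) :
    thsum N (A ++ k :: B) = ∑ i ∈ Icc 1 N, thsumIoc i N A * oddInvPow k i * thsum (i - 1) B := by
  simp only [← thsumIoc_zero, thsumIoc_append_cons, ← Icc_add_one_left_eq_Ioc, zero_add]

lemma alternating_sum_thsum_mul_thsums (ms : List ℕ) {n N : ℕ} (hnN : n ≤ N) :
    ∑ i ∈ range (ms.length + 1),
        (-1 : ℝ) ^ i * thsum N (ms.drop i).reverse * thsums n (ms.take i) =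
      thsumIoc n N ms.reverse := by
  induction ms generalizing n with
  | nil => simp [thsumIoc, thsum, thsums]
  | cons m ms ih =>
    have tail : ∑ i ∈ range (ms.length + 1), (-1 : ℝ) ^ (i + 1) *
          thsum N ((m :: ms).drop (i + 1)).reverse * thsums n ((m :: ms).take (i + 1)) =
        -∑ v ∈ Ioc 0 n, thsumIoc v N ms.reverse * oddInvPow m v := by
      rw [← sum_neg_distrib]
      simp only [List.drop_succ_cons, List.take_succ_cons, thsums_cons, mul_sum]
      rw [sum_comm]
      refine sum_congr rfl fun v hv => ?_
      rw [← ih ((mem_Icc.1 hv).2.trans hnN), sum_mul, ← sum_neg_distrib]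
      exact sum_congr rfl fun i _ => by ring
    have split := sum_Ioc_consecutive (fun v => thsumIoc v N ms.reverse * oddInvPow m v)
      (Nat.zero_le n) hnN
    rw [List.length_cons, sum_range_succ', tail]
    simp only [pow_zero, one_mul, List.drop_zero, List.take_zero, List.reverse_cons,
      thsum_append_cons, thsumIoc_append_cons, thsums, thsum, thsumIoc, mul_one]
    change _ + ∑ v ∈ Ioc 0 N, _ = _
    linarith

lemma alternating_sum_thsum_mul_sum_Icc (ms ks : List ℕ) (k N : ℕ) :
    ∑ i ∈ range (ms.length + 1), (-1 : ℝ) ^ i * thsum N (ms.drop i).reverse *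
        ∑ n ∈ Icc 1 N, thsum (n - 1) ks * thsums n (ms.take i) / ((2 * n - 1 : ℕ) : ℝ) ^ k =
      thsum N (ms.reverse ++ k :: ks) := by
  rw [thsum_append_cons]
  simp only [mul_sum]
  rw [sum_comm]
  refine sum_congr rfl fun n hn => ?_
  rw [← alternating_sum_thsum_mul_thsums ms (mem_Icc.1 hn).2]
  simp only [sum_mul]
  exact sum_congr rfl fun i _ => by simp only [oddInvPow]; ring

end MultipleTValue

open MultipleTValue in
theorem stmt8 (ms : List ℕ) (hms : ms ≠ []) (hmpos : ∀ m ∈ ms, 1 ≤ m)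
    (hlast : 2 ≤ ms.getLast hms) (ks : List ℕ) (hks : ks ≠ [])
    (hkpos : ∀ k ∈ ks, 1 ≤ k) :
    ∑ j ∈ Finset.Icc 1 (ms.length + 1),
      (-1 : ℝ) ^ (j - 1) * tval ((ms.drop (j - 1)).reverse) *
        convT ks (1 :: ms.take (j - 1)) =
      tval (ms.reverse ++ (ks.headI + 1) :: ks.tail) := by
  obtain ⟨k, ks, rfl⟩ := List.exists_cons_of_ne_nil hks
  have hkspos : ∀ x ∈ ks, 1 ≤ x := fun x hx => hkpos x (List.mem_cons_of_mem _ hx)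
  have hhead : ms.reverse.head? = some (ms.getLast hms) := by
    rw [List.head?_reverse, List.getLast?_eq_some_getLast hms]
  rw [← Ico_add_one_right_eq_Icc, sum_Ico_eq_sum_range]
  simp only [add_tsub_cancel_right, add_tsub_cancel_left, List.headI_cons, List.tail_cons]
  refine tendsto_nhds_unique ((tendsto_finsetSum _ fun i _ => ?_).congr
    (alternating_sum_thsum_mul_sum_Icc ms ks (k + 1))) (tendsto_thsum_tval ?_ ?_)
  · refine ((tendsto_thsum_tval ?_ ?_).const_mul _).mul
      (tendsto_sum_Icc_convT (hkpos k List.mem_cons_self) hkspos fun x hx =>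
        hmpos x (List.mem_of_mem_take hx))
    · exact fun x hx => hmpos x (List.mem_of_mem_drop (List.mem_reverse.1 hx))
    · rw [List.head?_reverse, List.getLast?_drop, ← List.head?_reverse, hhead]
      split_ifs <;> simp [hlast]
  · simp only [List.mem_append, List.mem_reverse, List.mem_cons]
    rintro x (hx | rfl | hx)
    exacts [hmpos x hx, by omega, hkspos x hx]
  · simpa [List.head?_append, hhead] using hlast
end

section
/- For positive integers m_1,...,m_p, n ∈ ℕ, and real x with |x| < 1, the series identity holds: Σ_{j=1}^p (-1)^{j-1} t_n^⋆(m_1,...,m_{j-1}) · ti_{m_p,...,m_j}(x) + (-1)^p t_n^⋆(m_1,...,m_p; x) equals 2n ∫_0^x t^{2n-1} dt (dt/(1−t²)) (dt/t)^{m_1−1} (t dt/(1−t²)) (dt/t)^{m_2−1} ··· (t dt/(1−t²)) (dt/t)^{m_p−1}, where the iterated integral is over the simplex with the leftmost form evaluated at the smallest variable. -/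
open Finset

/-- Iterated integral `I(f :: fs)(x) = ∫_0^x I(fs)(t) f(t) dt`; the head of the list is
the outermost (largest-variable) 1-form. -/
noncomputable def itInt : List (ℝ → ℝ) → ℝ → ℝ
  | [], _ => 1
  | f :: fs, x => ∫ t in (0:ℝ)..x, itInt fs t * f t

/-- `t_n^⋆` with variables: `Σ_{n ≥ n_1 ≥ ... ≥ n_r ≥ 1} Π x_j^{2n_j−1}/(2n_j−1)^{k_j}`
on (exponent, variable) pairs. -/
noncomputable def tstarP : ℕ → List (ℕ × ℝ) → ℝ
  | _, [] => 1
  | n, (k, x) :: rest =>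
      ∑ m ∈ Finset.Icc 1 n, x ^ (2 * m - 1) / ((2 * m - 1 : ℕ) : ℝ) ^ k * tstarP m rest

/-- Multiple t-polylogarithm
`ti_{k_1,...,k_r}(x) = Σ_{n_1 > ... > n_r > 0} x^{2n_1−1}/((2n_1−1)^{k_1}···(2n_r−1)^{k_r})`. -/
noncomputable def tpl : List ℕ → ℝ → ℝ
  | [], _ => 1
  | k :: rest, x =>
      ∑' n : ℕ+, x ^ (2 * (n : ℕ) - 1) / ((2 * (n : ℕ) - 1 : ℕ) : ℝ) ^ k *
        thsum ((n : ℕ) - 1) rest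

/-!
Write `F_n(m_1, …, m_p)(x)` for the left-hand side. Expanding `t_n^⋆(m_1, …)` along its first
index gives `F_n(m_1, m') = ti_{m_p,…,m_1}(x) - Σ_{a ≤ n} (2a-1)^{-m_1} F_a(m')(x)` with
`F_a(∅)(x) = x^{2a-1}`, so `F_n` is `ti` with all its indices above `n`. Differentiating termwise,
`F_n(m, k+1)' = F_n(m, k) / x` and `F_n(m, 1)' = x / (1 - x²) · F_n(m)`; the latter is the
summation by parts `(1 - s) Σ_j S_j s^j = Σ_j (S_{j+1} - S_j) s^{j+1}` for the partial sums
`S_j = t_j(…)`. As `F_n(0) = 0` for `n ≥ 1`, each of these identities integrates to peeling the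
outermost 1-form off the iterated integral, and induction on the weight concludes.
-/

lemma abs_sq_lt_one {x : ℝ} (hx : |x| < 1) : |x ^ 2| < 1 := by
  rwa [abs_pow, sq_lt_one_iff_abs_lt_one, abs_abs]

lemma one_sub_sq_ne_zero {x : ℝ} (hx : |x| < 1) : 1 - x ^ 2 ≠ 0 := by
  have := (sq_lt_one_iff_abs_lt_one x).2 hx
  linarith

lemma summable_succ_pow_mul_geometric (d : ℕ) {s : ℝ} (hs : |s| < 1) :
    Summable fun j : ℕ => ((j : ℝ) + 1) ^ d * s ^ j := by
  have hs' : ‖s‖ < 1 := by rwa [Real.norm_eq_abs]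
  refine (summable_sum (s := range (d + 1)) fun i _ =>
    (summable_pow_mul_geometric_of_norm_lt_one i hs').mul_left (d.choose i : ℝ)).congr fun j => ?_
  simp only [add_pow, one_pow, mul_one, sum_mul]
  exact sum_congr rfl fun i _ => by ring

section PolynomiallyBounded

variable {c : ℕ → ℝ} {C : ℝ} {d : ℕ}

lemma summable_mul_pow_of_abs_le (hc : ∀ j, |c j| ≤ C * ((j : ℝ) + 1) ^ d) {s : ℝ}
    (hs : |s| < 1) : Summable fun j => c j * s ^ j := by
  refine .of_norm_bounded ((summable_succ_pow_mul_geometric d (s := |s|)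
    (by rwa [abs_abs])).mul_left C) fun j => ?_
  rw [Real.norm_eq_abs, abs_mul, abs_pow, ← mul_assoc]
  exact mul_le_mul_of_nonneg_right (hc j) (by positivity)

lemma hasDerivAt_tsum_mul_pow_odd (hc : ∀ j, |c j| ≤ C * ((j : ℝ) + 1) ^ d) {x : ℝ}
    (hx : |x| < 1) :
    HasDerivAt (fun y => ∑' j, c j * y ^ (2 * j + 1))
      (∑' j, c j * (2 * j + 1) * x ^ (2 * j)) x := by
  set r := (1 + |x|) / 2 with hr_def
  have hr : |r| < 1 := by
    rw [abs_lt, hr_def]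
    constructor <;> linarith [abs_nonneg x]
  have hx_mem : x ∈ Metric.ball (0 : ℝ) r := by
    rw [mem_ball_zero_iff, Real.norm_eq_abs, hr_def]
    linarith
  refine hasDerivAt_tsum_of_isPreconnected (g := fun j y => c j * y ^ (2 * j + 1))
    (g' := fun j y => c j * (2 * j + 1) * y ^ (2 * j))
    (u := fun j : ℕ => 2 * C * (((j : ℝ) + 1) ^ (d + 1) * (r ^ 2) ^ j))
    ((summable_succ_pow_mul_geometric (d + 1) (abs_sq_lt_one hr)).mul_left (2 * C))
    Metric.isOpen_ball (convex_ball 0 r).isPreconnected (fun j y _ => ?_) (fun j y hy => ?_)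
    hx_mem ?_ hx_mem
  · refine ((hasDerivAt_pow (2 * j + 1) y).const_mul (c j)).congr_deriv ?_
    rw [Nat.add_sub_cancel]
    push_cast
    ring
  · rw [mem_ball_zero_iff, Real.norm_eq_abs] at hy
    calc ‖c j * (2 * j + 1) * y ^ (2 * j)‖ = |c j| * (2 * j + 1) * |y| ^ (2 * j) := by
          rw [Real.norm_eq_abs, abs_mul, abs_mul, abs_pow,
            abs_of_nonneg (by positivity : (0 : ℝ) ≤ 2 * j + 1)]
      _ ≤ C * ((j : ℝ) + 1) ^ d * (2 * (j + 1)) * r ^ (2 * j) := by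
          have hC : 0 ≤ C * ((j : ℝ) + 1) ^ d := (abs_nonneg _).trans (hc j)
          gcongr
          · exact hc j
          · linarith
      _ = 2 * C * (((j : ℝ) + 1) ^ (d + 1) * (r ^ 2) ^ j) := by rw [pow_mul]; ring
  · exact ((summable_mul_pow_of_abs_le hc (abs_sq_lt_one hx)).mul_left x).congr fun j => by ring

lemma continuousOn_tsum_mul_pow_even (hc : ∀ j, |c j| ≤ C * ((j : ℝ) + 1) ^ d) {r : ℝ}
    (hr : |r| < 1) :
    ContinuousOn (fun y => ∑' j, c j * y ^ (2 * j)) (Metric.closedBall 0 r) := by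
  refine continuousOn_tsum (u := fun j : ℕ => C * (((j : ℝ) + 1) ^ d * (r ^ 2) ^ j))
    (fun j => (continuous_const.mul (continuous_pow _)).continuousOn)
    ((summable_succ_pow_mul_geometric d (abs_sq_lt_one hr)).mul_left C) fun j y hy => ?_
  rw [mem_closedBall_zero_iff, Real.norm_eq_abs] at hy
  rw [Real.norm_eq_abs, abs_mul, abs_pow, ← mul_assoc, ← pow_mul]
  exact mul_le_mul (hc j) (pow_le_pow_left₀ (abs_nonneg y) hy _)
    (by positivity) ((abs_nonneg _).trans (hc j))

end PolynomiallyBounded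

lemma one_sub_mul_tsum_mul_pow {S : ℕ → ℝ} {s : ℝ} (h0 : S 0 = 0)
    (hS : Summable fun j => S j * s ^ j) :
    (1 - s) * ∑' j, S j * s ^ j = ∑' j, (S (j + 1) - S j) * s ^ (j + 1) := by
  have hshift : Summable fun j => S (j + 1) * s ^ (j + 1) := (summable_nat_add_iff 1).2 hS
  have hmul : Summable fun j => S j * s ^ (j + 1) :=
    (hS.mul_left s).congr fun j => by ring
  calc (1 - s) * ∑' j, S j * s ^ j
      = ∑' j, S (j + 1) * s ^ (j + 1) - ∑' j, S j * s ^ (j + 1) := by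
        rw [sub_mul, one_mul, ← hS.tsum_mul_left, hS.tsum_eq_zero_add, h0, zero_mul, zero_add]
        congr 1
        exact tsum_congr fun j => by ring
    _ = ∑' j, (S (j + 1) - S j) * s ^ (j + 1) := by
        rw [← hshift.tsum_sub hmul]
        exact tsum_congr fun j => by ring

lemma one_div_natCast_pow_le_one (m k : ℕ) : 1 / (m : ℝ) ^ k ≤ 1 := by
  rcases Nat.eq_zero_or_pos m with rfl | hm
  · rcases k with _ | k <;> simp
  · exact div_le_one_of_le₀ (one_le_pow₀ (by exact_mod_cast hm)) (by positivity)

lemma thsum_nonneg (n : ℕ) (L : List ℕ) : 0 ≤ thsum n L := by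
  induction L generalizing n with
  | nil => simp [thsum]
  | cons k rest ih => exact sum_nonneg fun m _ => mul_nonneg (by positivity) (ih _)

lemma thsum_le (n : ℕ) (L : List ℕ) : thsum n L ≤ ((n : ℝ) + 1) ^ L.length := by
  induction L generalizing n with
  | nil => simp [thsum]
  | cons k rest ih =>
    calc thsum n (k :: rest) ≤ ∑ m ∈ Icc 1 n, ((n : ℝ) + 1) ^ rest.length := by
          refine sum_le_sum fun m hm => ?_
          have hmn : ((m - 1 : ℕ) : ℝ) ≤ n := by
            exact_mod_cast (by have := mem_Icc.1 hm; omega : m - 1 ≤ n)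
          calc 1 / ((2 * m - 1 : ℕ) : ℝ) ^ k * thsum (m - 1) rest
              ≤ 1 * (((m - 1 : ℕ) : ℝ) + 1) ^ rest.length :=
                mul_le_mul (one_div_natCast_pow_le_one _ _) (ih _) (thsum_nonneg _ _) zero_le_one
            _ ≤ ((n : ℝ) + 1) ^ rest.length := by rw [one_mul]; gcongr
      _ = n * ((n : ℝ) + 1) ^ rest.length := by simp
      _ ≤ ((n : ℝ) + 1) ^ (k :: rest).length := by
          rw [List.length_cons, pow_succ, mul_comm]
          gcongr
          linarith

lemma thsum_succ_cons (j k : ℕ) (r : List ℕ) :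
    thsum (j + 1) (k :: r) = thsum j (k :: r) + thsum j r / (2 * (j : ℝ) + 1) ^ k := by
  rw [thsum, thsum, sum_Icc_succ_top (by omega), Nat.add_sub_cancel,
    show 2 * (j + 1) - 1 = 2 * j + 1 by omega]
  push_cast
  ring

lemma abs_thsum_div_le (j k : ℕ) (L : List ℕ) :
    |thsum j L / (2 * (j : ℝ) + 1) ^ k| ≤ ((j : ℝ) + 1) ^ L.length := by
  rw [abs_of_nonneg (div_nonneg (thsum_nonneg _ _) (by positivity))]
  have h1 : (1 : ℝ) ≤ (2 * j + 1) ^ k := one_le_pow₀ (by linarith [j.cast_nonneg (α := ℝ)])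
  exact (div_le_self (thsum_nonneg _ _) h1).trans (thsum_le _ _)

lemma tpl_cons (k : ℕ) (rest : List ℕ) (x : ℝ) :
    tpl (k :: rest) x = ∑' j : ℕ, thsum j rest / (2 * (j : ℝ) + 1) ^ k * x ^ (2 * j + 1) := by
  rw [tpl, tsum_pnat_eq_tsum_succ
    (f := fun m => x ^ (2 * m - 1) / ((2 * m - 1 : ℕ) : ℝ) ^ k * thsum (m - 1) rest)]
  refine tsum_congr fun j => ?_
  rw [Nat.add_sub_cancel, show 2 * (j + 1) - 1 = 2 * j + 1 by omega]
  push_cast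
  ring

lemma tpl_zero {L : List ℕ} (hL : L ≠ []) : tpl L 0 = 0 := by
  obtain ⟨k, rest, rfl⟩ := List.exists_cons_of_ne_nil hL
  simp [tpl_cons]

noncomputable def tplDeriv : List ℕ → ℝ → ℝ
  | [], _ => 0
  | k :: rest, x =>
      ∑' j : ℕ, thsum j rest / (2 * (j : ℝ) + 1) ^ k * (2 * j + 1) * x ^ (2 * j)

lemma hasDerivAt_tpl (L : List ℕ) {x : ℝ} (hx : |x| < 1) :
    HasDerivAt (tpl L) (tplDeriv L x) x := by
  cases L with
  | nil => exact hasDerivAt_const x (1 : ℝ)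
  | cons k rest =>
    rw [show tpl (k :: rest) = _ from funext (tpl_cons k rest)]
    exact hasDerivAt_tsum_mul_pow_odd
      (fun j => (abs_thsum_div_le j k rest).trans_eq (one_mul _).symm) hx

lemma continuousOn_tplDeriv (L : List ℕ) {r : ℝ} (hr : |r| < 1) :
    ContinuousOn (tplDeriv L) (Metric.closedBall 0 r) := by
  cases L with
  | nil => exact continuousOn_const
  | cons k rest =>
    refine continuousOn_tsum_mul_pow_even (C := 2) (d := rest.length + 1) (fun j => ?_) hr
    rw [abs_mul, abs_of_nonneg (by positivity : (0 : ℝ) ≤ 2 * j + 1), pow_succ]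
    calc _ ≤ ((j : ℝ) + 1) ^ rest.length * (2 * (j + 1)) :=
          mul_le_mul (abs_thsum_div_le j k rest) (by linarith) (by positivity) (by positivity)
      _ = _ := by ring

lemma tplDeriv_succ_cons (k : ℕ) (rest : List ℕ) {x : ℝ} (hx : x ≠ 0) :
    tplDeriv ((k + 1) :: rest) x = tpl (k :: rest) x / x := by
  rw [tplDeriv, tpl_cons, ← tsum_div_const]
  refine tsum_congr fun j => ?_
  field_simp
  ring

lemma tplDeriv_one_nil {x : ℝ} (hx : |x| < 1) : tplDeriv [1] x = (1 - x ^ 2)⁻¹ := by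
  rw [← tsum_geometric_of_lt_one (sq_nonneg x) ((sq_lt_one_iff_abs_lt_one x).2 hx)]
  refine tsum_congr fun j => ?_
  rw [thsum, pow_mul, pow_one, div_mul_cancel₀ _ (by positivity), one_mul]

lemma tplDeriv_one_cons {K : List ℕ} (hK : K ≠ []) {x : ℝ} (hx : |x| < 1) :
    tplDeriv (1 :: K) x = x / (1 - x ^ 2) * tpl K x := by
  obtain ⟨k, r, rfl⟩ := List.exists_cons_of_ne_nil hK
  have hS : Summable fun j => thsum j (k :: r) * (x ^ 2) ^ j :=
    summable_mul_pow_of_abs_le (fun j => (abs_of_nonneg (thsum_nonneg _ _)).trans_le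
      ((thsum_le _ _).trans_eq (one_mul _).symm)) (abs_sq_lt_one hx)
  have habel := one_sub_mul_tsum_mul_pow (by simp [thsum]) hS
  simp only [thsum_succ_cons, add_sub_cancel_left] at habel
  have hderiv : tplDeriv (1 :: k :: r) x = ∑' j, thsum j (k :: r) * (x ^ 2) ^ j :=
    tsum_congr fun j => by rw [pow_one, div_mul_cancel₀ _ (by positivity), pow_mul]
  rw [hderiv, div_mul_eq_mul_div, eq_div_iff (one_sub_sq_ne_zero hx), mul_comm, habel, tpl_cons,
    ← tsum_mul_left]
  exact tsum_congr fun j => by ring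

/-- The left-hand side of the theorem, unfolded along the first exponent of `t_n^⋆`; for
`ms ≠ []` it is the series of `ti_{rev ms}(x)` restricted to indices larger than `n`. -/
noncomputable def tiTrunc : ℕ → List ℕ → ℝ → ℝ
  | n, [], x => x ^ (2 * n - 1)
  | n, m :: ms, x =>
      tpl (m :: ms).reverse x -
        ∑ a ∈ Icc 1 n, 1 / ((2 * a - 1 : ℕ) : ℝ) ^ m * tiTrunc a ms x

noncomputable def tiTruncDeriv : ℕ → List ℕ → ℝ → ℝ
  | n, [], x => ((2 * n - 1 : ℕ) : ℝ) * x ^ (2 * n - 1 - 1)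
  | n, m :: ms, x =>
      tplDeriv (m :: ms).reverse x -
        ∑ a ∈ Icc 1 n, 1 / ((2 * a - 1 : ℕ) : ℝ) ^ m * tiTruncDeriv a ms x

lemma hasDerivAt_tiTrunc (n : ℕ) (ms : List ℕ) {x : ℝ} (hx : |x| < 1) :
    HasDerivAt (tiTrunc n ms) (tiTruncDeriv n ms x) x := by
  induction ms generalizing n with
  | nil => exact hasDerivAt_pow _ x
  | cons m ms ih =>
    exact (hasDerivAt_tpl _ hx).sub (HasDerivAt.fun_sum fun a _ => (ih a).const_mul _)

lemma continuousOn_tiTruncDeriv (n : ℕ) (ms : List ℕ) {r : ℝ} (hr : |r| < 1) :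
    ContinuousOn (tiTruncDeriv n ms) (Metric.closedBall 0 r) := by
  induction ms generalizing n with
  | nil => exact (continuous_const.mul (continuous_pow _)).continuousOn
  | cons m ms ih =>
    exact (continuousOn_tplDeriv _ hr).sub
      (continuousOn_finsetSum _ fun a _ => continuousOn_const.mul (ih a))

lemma tiTrunc_zero {n : ℕ} (hn : 1 ≤ n) (ms : List ℕ) : tiTrunc n ms 0 = 0 := by
  induction ms generalizing n with
  | nil => exact zero_pow (by omega)
  | cons m ms ih =>
    rw [tiTrunc, tpl_zero (by simp), sub_eq_self]
    exact sum_eq_zero fun a ha => by rw [ih (mem_Icc.1 ha).1, mul_zero]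

lemma uIcc_zero_subset_closedBall (x : ℝ) : Set.uIcc 0 x ⊆ Metric.closedBall 0 |x| :=
  fun t ht => by simpa using Set.abs_sub_left_of_mem_uIcc ht

lemma abs_lt_one_of_mem_uIcc {x t : ℝ} (hx : |x| < 1) (ht : t ∈ Set.uIcc 0 x) : |t| < 1 :=
  (mem_closedBall_zero_iff.1 (uIcc_zero_subset_closedBall x ht)).trans_lt hx

lemma integral_tiTruncDeriv {n : ℕ} (hn : 1 ≤ n) (ms : List ℕ) {x : ℝ} (hx : |x| < 1) :
    ∫ t in (0 : ℝ)..x, tiTruncDeriv n ms t = tiTrunc n ms x := by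
  have hcont := continuousOn_tiTruncDeriv n ms (r := |x|) (by rwa [abs_abs])
  rw [intervalIntegral.integral_eq_sub_of_hasDerivAt
    (fun t ht => hasDerivAt_tiTrunc n ms (abs_lt_one_of_mem_uIcc hx ht))
    (hcont.mono (uIcc_zero_subset_closedBall x)).intervalIntegrable, tiTrunc_zero hn, sub_zero]

lemma tiTruncDeriv_append_succ (n : ℕ) (L : List ℕ) (k : ℕ) {x : ℝ} (hx : x ≠ 0) :
    tiTruncDeriv n (L ++ [k + 1]) x = tiTrunc n (L ++ [k]) x / x := by
  induction L generalizing n with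
  | nil =>
    simp only [List.nil_append, tiTruncDeriv, tiTrunc, List.reverse_singleton,
      tplDeriv_succ_cons k [] hx, sub_div, sum_div]
    congr 1
    refine sum_congr rfl fun a ha => ?_
    obtain ⟨b, rfl⟩ : ∃ b, a = b + 1 := ⟨a - 1, by have := (mem_Icc.1 ha).1; omega⟩
    rw [show 2 * (b + 1) - 1 = 2 * b + 1 by omega, Nat.add_sub_cancel]
    push_cast
    field_simp
    ring
  | cons m L ih =>
    simp only [List.cons_append, tiTruncDeriv, tiTrunc]
    rw [show (m :: (L ++ [k + 1])).reverse = (k + 1) :: (m :: L).reverse by simp,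
      show (m :: (L ++ [k])).reverse = k :: (m :: L).reverse by simp, tplDeriv_succ_cons _ _ hx,
      sub_div, sum_div]
    simp only [ih, mul_div_assoc]

lemma tiTruncDeriv_append_one {n : ℕ} (hn : 1 ≤ n) (L : List ℕ) {x : ℝ} (hx : |x| < 1) :
    tiTruncDeriv n (L ++ [1]) x = x / (1 - x ^ 2) * tiTrunc n L x := by
  induction L generalizing n with
  | nil =>
    have hterm : ∀ a ∈ Icc 1 n,
        1 / ((2 * a - 1 : ℕ) : ℝ) ^ 1 * (((2 * a - 1 : ℕ) : ℝ) * x ^ (2 * a - 1 - 1)) =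
          (x ^ 2) ^ (a - 1) := fun a ha => by
      have h2a : ((2 * a - 1 : ℕ) : ℝ) ≠ 0 := by
        exact_mod_cast (by have := (mem_Icc.1 ha).1; omega : 2 * a - 1 ≠ 0)
      rw [pow_one, one_div, inv_mul_cancel_left₀ h2a, ← pow_mul]
      congr 1
      omega
    have hgeom : ∑ a ∈ Icc 1 n, (x ^ 2) ^ (a - 1) = ∑ i ∈ range n, (x ^ 2) ^ i := by
      rw [← Finset.Ico_add_one_right_eq_Icc, sum_Ico_eq_sum_range]
      simp
    have hpow : x * x ^ (2 * n - 1) = (x ^ 2) ^ n := by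
      rw [← pow_succ', ← pow_mul, Nat.sub_add_cancel (by omega)]
    simp only [List.nil_append, tiTruncDeriv, tiTrunc, List.reverse_singleton]
    rw [sum_congr rfl hterm, hgeom, tplDeriv_one_nil hx, div_mul_eq_mul_div, hpow]
    have hsum := geom_sum_mul (x ^ 2) n
    have := one_sub_sq_ne_zero hx
    field_simp
    linear_combination hsum
  | cons m L ih =>
    simp only [List.cons_append, tiTruncDeriv, tiTrunc]
    rw [show (m :: (L ++ [1])).reverse = 1 :: (m :: L).reverse by simp,
      tplDeriv_one_cons (by simp) hx, mul_sub, mul_sum]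
    congr 1
    refine sum_congr rfl fun a ha => ?_
    rw [ih (mem_Icc.1 ha).1]
    ring

/-- The 1-forms of the theorem's iterated integral, innermost first. -/
noncomputable def oneForms (n : ℕ) (ms : List ℕ) : List (ℝ → ℝ) :=
  (fun t : ℝ => t ^ (2 * n - 1)) ::
    ((fun t : ℝ => 1 / (1 - t ^ 2)) :: List.replicate (ms.headI - 1) (fun t : ℝ => 1 / t) ++
      (ms.tail.map fun m =>
        (fun t : ℝ => t / (1 - t ^ 2)) :: List.replicate (m - 1) (fun t : ℝ => 1 / t)).flatten)

lemma oneForms_singleton_one (n : ℕ) :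
    oneForms n [1] = [fun t : ℝ => t ^ (2 * n - 1)] ++ [fun t : ℝ => 1 / (1 - t ^ 2)] := by
  simp [oneForms]

lemma oneForms_append_succ (n : ℕ) (L : List ℕ) {k : ℕ} (hk : 1 ≤ k) :
    oneForms n (L ++ [k + 1]) = oneForms n (L ++ [k]) ++ [fun t : ℝ => 1 / t] := by
  obtain ⟨k, rfl⟩ : ∃ k', k = k' + 1 := ⟨k - 1, by omega⟩
  cases L <;> simp [oneForms, List.replicate_succ']

lemma oneForms_append_one (n : ℕ) {L : List ℕ} (hL : L ≠ []) :
    oneForms n (L ++ [1]) = oneForms n L ++ [fun t : ℝ => t / (1 - t ^ 2)] := by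
  obtain ⟨m, L, rfl⟩ := List.exists_cons_of_ne_nil hL
  simp [oneForms]

lemma itInt_reverse_append_singleton (l : List (ℝ → ℝ)) (f : ℝ → ℝ) (x : ℝ) :
    itInt (l ++ [f]).reverse x = ∫ t in (0 : ℝ)..x, itInt l.reverse t * f t := by
  rw [List.reverse_append]
  rfl

lemma itInt_singleton_pow {n : ℕ} (hn : 1 ≤ n) (x : ℝ) :
    itInt [fun t : ℝ => t ^ (2 * n - 1)] x = x ^ (2 * n) / (2 * n) := by
  simp only [itInt, one_mul]
  rw [integral_pow, Nat.sub_add_cancel (by omega), zero_pow (by omega), sub_zero]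
  simp [Nat.cast_sub (by omega : 1 ≤ 2 * n)]

lemma tiTrunc_eq_itInt_append_of_ae {n : ℕ} (hn : 1 ≤ n) {ms : List ℕ} {x : ℝ}
    (hx : |x| < 1) {l : List (ℝ → ℝ)} {f : ℝ → ℝ}
    (h : ∀ᵐ t, t ∈ Set.uIoc 0 x → tiTruncDeriv n ms t = 2 * n * (itInt l.reverse t * f t)) :
    tiTrunc n ms x = 2 * n * itInt (l ++ [f]).reverse x := by
  rw [← integral_tiTruncDeriv hn ms hx, intervalIntegral.integral_congr_ae h,
    intervalIntegral.integral_const_mul, itInt_reverse_append_singleton]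

lemma tiTrunc_singleton_one {n : ℕ} (hn : 1 ≤ n) {x : ℝ} (hx : |x| < 1) :
    tiTrunc n [1] x = 2 * n * itInt (oneForms n [1]).reverse x := by
  rw [oneForms_singleton_one]
  refine tiTrunc_eq_itInt_append_of_ae hn hx (.of_forall fun t ht => ?_)
  have hn' : (n : ℝ) ≠ 0 := by positivity
  rw [List.reverse_singleton, itInt_singleton_pow hn,
    show [1] = [] ++ [1] from rfl,
    tiTruncDeriv_append_one hn [] (abs_lt_one_of_mem_uIcc hx (Set.uIoc_subset_uIcc ht)), tiTrunc,
    div_mul_eq_mul_div, ← pow_succ', Nat.sub_add_cancel (by omega)]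
  field_simp

lemma tiTrunc_append_succ {n : ℕ} (hn : 1 ≤ n) {L : List ℕ} {k : ℕ} (hk : 1 ≤ k)
    (ih : ∀ t : ℝ, |t| < 1 →
      tiTrunc n (L ++ [k]) t = 2 * n * itInt (oneForms n (L ++ [k])).reverse t)
    {x : ℝ} (hx : |x| < 1) :
    tiTrunc n (L ++ [k + 1]) x = 2 * n * itInt (oneForms n (L ++ [k + 1])).reverse x := by
  rw [oneForms_append_succ n L hk]
  refine tiTrunc_eq_itInt_append_of_ae hn hx ?_
  filter_upwards [MeasureTheory.Measure.ae_ne MeasureTheory.volume 0] with t ht0 ht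
  rw [tiTruncDeriv_append_succ n L k ht0,
    ih t (abs_lt_one_of_mem_uIcc hx (Set.uIoc_subset_uIcc ht))]
  ring

lemma tiTrunc_append_one {n : ℕ} (hn : 1 ≤ n) {L : List ℕ} (hL : L ≠ [])
    (ih : ∀ t : ℝ, |t| < 1 → tiTrunc n L t = 2 * n * itInt (oneForms n L).reverse t)
    {x : ℝ} (hx : |x| < 1) :
    tiTrunc n (L ++ [1]) x = 2 * n * itInt (oneForms n (L ++ [1])).reverse x := by
  rw [oneForms_append_one n hL]
  refine tiTrunc_eq_itInt_append_of_ae hn hx (.of_forall fun t ht => ?_)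
  have ht' := abs_lt_one_of_mem_uIcc hx (Set.uIoc_subset_uIcc ht)
  rw [tiTruncDeriv_append_one hn L ht', ih t ht']
  ring

theorem tiTrunc_eq_itInt {n : ℕ} (hn : 1 ≤ n) (L : List ℕ) (hL : ∀ m ∈ L, 1 ≤ m)
    {k : ℕ} (hk : 1 ≤ k) (x : ℝ) (hx : |x| < 1) :
    tiTrunc n (L ++ [k]) x = 2 * n * itInt (oneForms n (L ++ [k])).reverse x := by
  induction L using List.reverseRecOn generalizing k x with
  | nil =>
    induction k, hk using Nat.le_induction generalizing x with
    | base => exact tiTrunc_singleton_one hn hx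
    | succ k hk ih => exact tiTrunc_append_succ hn hk ih hx
  | append_singleton L m ih =>
    induction k, hk using Nat.le_induction generalizing x with
    | base =>
      exact tiTrunc_append_one hn (by simp)
        (ih (fun a ha => hL a (by simp [ha])) (hL m (by simp))) hx
    | succ k hk ih' => exact tiTrunc_append_succ hn hk ih' hx

noncomputable def tstarTiSum (n : ℕ) (ms : List ℕ) (x : ℝ) : ℝ :=
  ∑ j ∈ Icc 1 ms.length,
    (-1 : ℝ) ^ (j - 1) * thsums n (ms.take (j - 1)) * tpl ((ms.drop (j - 1)).reverse) x

lemma tstarTiSum_eq_sum_range (n : ℕ) (ms : List ℕ) (x : ℝ) :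
    tstarTiSum n ms x =
      ∑ i ∈ range ms.length,
        (-1 : ℝ) ^ i * thsums n (ms.take i) * tpl (ms.drop i).reverse x := by
  rw [tstarTiSum, ← Finset.Ico_add_one_right_eq_Icc, sum_Ico_eq_sum_range]
  simp [add_comm 1]

lemma tstarTiSum_cons (n m : ℕ) (ms : List ℕ) (x : ℝ) :
    tstarTiSum n (m :: ms) x = tpl (m :: ms).reverse x -
      ∑ a ∈ Icc 1 n, 1 / ((2 * a - 1 : ℕ) : ℝ) ^ m * tstarTiSum a ms x := by
  simp only [tstarTiSum_eq_sum_range, List.length_cons, sum_range_succ', List.take_succ_cons,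
    List.drop_succ_cons, thsums, mul_sum, sum_mul]
  rw [sum_comm, List.take_zero, List.drop_zero, show thsums n [] = 1 from rfl, pow_zero, one_mul,
    one_mul, add_comm, sub_eq_add_neg, ← sum_neg_distrib]
  congr 1
  refine sum_congr rfl fun a _ => ?_
  rw [← sum_neg_distrib]
  exact sum_congr rfl fun i _ => by ring

lemma tstarP_zip_singleton (n m : ℕ) (x : ℝ) :
    tstarP n ([m].zip (List.replicate ([m].length - 1) (1 : ℝ) ++ [x])) =
      ∑ a ∈ Icc 1 n, 1 / ((2 * a - 1 : ℕ) : ℝ) ^ m * tiTrunc a [] x := by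
  simp [tstarP, tiTrunc, div_eq_inv_mul]

lemma tstarP_zip_cons (n m : ℕ) {ms : List ℕ} (hms : ms ≠ []) (x : ℝ) :
    tstarP n ((m :: ms).zip (List.replicate ((m :: ms).length - 1) (1 : ℝ) ++ [x])) =
      ∑ a ∈ Icc 1 n, 1 / ((2 * a - 1 : ℕ) : ℝ) ^ m *
        tstarP a (ms.zip (List.replicate (ms.length - 1) (1 : ℝ) ++ [x])) := by
  obtain ⟨l, hl⟩ : ∃ l, ms.length = l + 1 := ⟨ms.length - 1, by
    have := List.length_pos_of_ne_nil hms; omega⟩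
  simp only [List.length_cons, hl, Nat.add_sub_cancel, List.replicate_succ, List.cons_append,
    List.zip_cons_cons, tstarP, one_pow]

theorem tstarTiSum_add_tstarP_eq_tiTrunc (n : ℕ) {ms : List ℕ} (hms : ms ≠ []) (x : ℝ) :
    tstarTiSum n ms x + (-1 : ℝ) ^ ms.length *
        tstarP n (ms.zip (List.replicate (ms.length - 1) (1 : ℝ) ++ [x])) = tiTrunc n ms x := by
  induction ms generalizing n with
  | nil => exact absurd rfl hms
  | cons m ms ih =>
    rcases eq_or_ne ms [] with rfl | hms'
    · rw [tstarTiSum_cons, tstarP_zip_singleton, tiTrunc]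
      simp [tstarTiSum, sub_eq_add_neg]
    · rw [tstarTiSum_cons, tstarP_zip_cons n m hms', tiTrunc, List.length_cons, pow_succ, mul_sum,
        sub_add, ← sum_sub_distrib]
      congr 1
      refine sum_congr rfl fun a _ => ?_
      rw [← ih a hms']
      ring

theorem stmt9 (ms : List ℕ) (hms : ms ≠ []) (hmpos : ∀ m ∈ ms, 1 ≤ m)
    (n : ℕ) (hn : 1 ≤ n) (x : ℝ) (hx : |x| < 1) :
    ∑ j ∈ Finset.Icc 1 ms.length,
        (-1 : ℝ) ^ (j - 1) * thsums n (ms.take (j - 1)) * tpl ((ms.drop (j - 1)).reverse) x +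
      (-1 : ℝ) ^ ms.length *
        tstarP n (ms.zip (List.replicate (ms.length - 1) (1 : ℝ) ++ [x])) =
      (2 * n : ℝ) * itInt
        (((fun t : ℝ => t ^ (2 * n - 1)) ::
          ((fun t : ℝ => 1 / (1 - t ^ 2)) ::
              List.replicate (ms.headI - 1) (fun t : ℝ => 1 / t) ++
            (ms.tail.map (fun m =>
              (fun t : ℝ => t / (1 - t ^ 2)) ::
                List.replicate (m - 1) (fun t : ℝ => 1 / t))).flatten)).reverse) x := by
  obtain ⟨L, k, rfl⟩ : ∃ L k, ms = L ++ [k] := by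
    obtain ⟨L, k, h⟩ := (List.eq_nil_or_concat ms).resolve_left hms
    exact ⟨L, k, by simpa using h⟩
  refine (tstarTiSum_add_tstarP_eq_tiTrunc n hms x).trans ?_
  exact tiTrunc_eq_itInt hn L (fun m hm => hmpos m (by simp [hm])) (hmpos k (by simp)) x hx
end
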